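/- arXiv:2312.07990 — 2 statements merged into one kernel-verified Lean document; each statement's English description precedes it below -/
import Mathlib

section
/- Suppose the step size is constant, α_k = α > 0 for all k, and that there is G > 0 with E[‖∇f(x_k)‖²] ≤ G² for all k. Then for every integer K ≥ 1 and every x ∈ H, (1/K) ∑_{k=0}^{K−1} V_k(x) ≤ (σ²/b + G²) · α/2 + ‖x_0 − x‖² / (2αK). -/
/-!
Expanding `‖x_{k+1} - x‖² = ‖x_k - x‖² - 2α⟪g_k, x_k - x⟫ + α²‖g_k‖²` and taking expectations,
the tower property replaces `g_k` by `∇f(x_k)` in the cross term, and the bias–variance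
decomposition `E‖g_k‖² = E‖g_k - ∇f(x_k)‖² + E‖∇f(x_k)‖²` bounds the last term by
`α²(σ²/b + G²)`. The resulting inequality
`2α V_k(x) ≤ E‖x_k - x‖² - E‖x_{k+1} - x‖² + α²(σ²/b + G²)` telescopes over `k < K`.
-/

open MeasureTheory ProbabilityTheory Filter RealInnerProductSpace

section ConditionalExpectation

variable {Ω H : Type*} {m m0 : MeasurableSpace Ω} {μ : Measure Ω}
  [NormedAddCommGroup H] [InnerProductSpace ℝ H]

lemma MeasureTheory.MemLp.integrable_inner {Y Z : Ω → H} (hY : MemLp Y 2 μ) (hZ : MemLp Z 2 μ) :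
    Integrable (fun ω => ⟪Y ω, Z ω⟫) μ := by
  refine (L2.integrable_inner (𝕜 := ℝ) (hY.toLp Y) (hZ.toLp Z)).congr ?_
  filter_upwards [hY.coeFn_toLp, hZ.coeFn_toLp] with ω hYω hZω
  rw [hYω, hZω]

lemma integral_le_of_ae_condExp_le [IsProbabilityMeasure μ] (hm : m ≤ m0) {F : Ω → ℝ} {c : ℝ}
    (hF : ∀ᵐ ω ∂μ, (μ[F|m]) ω ≤ c) : ∫ ω, F ω ∂μ ≤ c := by
  rw [← integral_condExp hm]
  simpa using integral_mono_ae integrable_condExp (integrable_const c) hF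

variable [CompleteSpace H] [IsFiniteMeasure μ]

lemma integral_inner_condExp_left (hm : m ≤ m0) {Y Z : Ω → H} (hY : MemLp Y 2 μ)
    (hZ : MemLp Z 2 μ) (hZm : AEStronglyMeasurable[m] Z μ) :
    ∫ ω, ⟪(μ[Y|m]) ω, Z ω⟫ ∂μ = ∫ ω, ⟪Y ω, Z ω⟫ ∂μ := by
  calc ∫ ω, ⟪(μ[Y|m]) ω, Z ω⟫ ∂μ
      = ⟪(condExpL2 H ℝ hm (hY.toLp Y) : Ω →₂[μ] H), hZ.toLp Z⟫ := by
        rw [L2.inner_def]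
        refine integral_congr_ae ?_
        filter_upwards [hY.condExpL2_ae_eq_condExp (𝕜 := ℝ) hm, hZ.coeFn_toLp] with ω hYω hZω
        rw [hYω, hZω]
    _ = ⟪hY.toLp Y, hZ.toLp Z⟫ :=
        inner_condExpL2_eq_inner_fun hm _ _ (hZm.congr hZ.coeFn_toLp.symm)
    _ = ∫ ω, ⟪Y ω, Z ω⟫ ∂μ := by
        rw [L2.inner_def]
        refine integral_congr_ae ?_
        filter_upwards [hY.coeFn_toLp, hZ.coeFn_toLp] with ω hYω hZω
        rw [hYω, hZω]

lemma integral_norm_sq_eq_add_of_condExp_ae_eq (hm : m ≤ m0) {Y Z : Ω → H} (hY : MemLp Y 2 μ)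
    (hYZ : μ[Y|m] =ᵐ[μ] Z) :
    ∫ ω, ‖Y ω‖ ^ 2 ∂μ = ∫ ω, ‖Y ω - Z ω‖ ^ 2 ∂μ + ∫ ω, ‖Z ω‖ ^ 2 ∂μ := by
  have hZ : MemLp Z 2 μ := (hY.condExp one_le_two).ae_eq hYZ
  have hZm : AEStronglyMeasurable[m] Z μ :=
    stronglyMeasurable_condExp.aestronglyMeasurable.congr hYZ
  have hcross : ∫ ω, ⟪Y ω, Z ω⟫ ∂μ = ∫ ω, ‖Z ω‖ ^ 2 ∂μ := by
    rw [← integral_inner_condExp_left hm hY hZ hZm]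
    refine integral_congr_ae ?_
    filter_upwards [hYZ] with ω hω
    rw [hω, real_inner_self_eq_norm_sq]
  have hexpand : ∫ ω, ‖Y ω - Z ω‖ ^ 2 ∂μ
      = ∫ ω, ‖Y ω‖ ^ 2 ∂μ - 2 * ∫ ω, ⟪Y ω, Z ω⟫ ∂μ + ∫ ω, ‖Z ω‖ ^ 2 ∂μ := by
    have hYZ_int : Integrable (fun ω => ‖Y ω‖ ^ 2 - 2 * ⟪Y ω, Z ω⟫) μ :=
      hY.norm.integrable_sq.sub ((hY.integrable_inner hZ).const_mul 2)
    simp_rw [norm_sub_sq_real]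
    rw [integral_add hYZ_int hZ.norm.integrable_sq, integral_sub hY.norm.integrable_sq
      ((hY.integrable_inner hZ).const_mul 2), integral_const_mul]
  linarith

lemma integral_norm_sub_smul_sq (hm : m ≤ m0) {U Y Z : Ω → H} (hU : MemLp U 2 μ)
    (hUm : AEStronglyMeasurable[m] U μ) (hY : MemLp Y 2 μ) (hYZ : μ[Y|m] =ᵐ[μ] Z) (a : ℝ) :
    ∫ ω, ‖U ω - a • Y ω‖ ^ 2 ∂μ
      = ∫ ω, ‖U ω‖ ^ 2 ∂μ - 2 * a * ∫ ω, ⟪Z ω, U ω⟫ ∂μ + a ^ 2 * ∫ ω, ‖Y ω‖ ^ 2 ∂μ := by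
  have hcross : ∫ ω, ⟪Y ω, U ω⟫ ∂μ = ∫ ω, ⟪Z ω, U ω⟫ ∂μ := by
    rw [← integral_inner_condExp_left hm hY hU hUm]
    refine integral_congr_ae ?_
    filter_upwards [hYZ] with ω hω
    rw [hω]
  have hpt : ∀ ω, ‖U ω - a • Y ω‖ ^ 2
      = ‖U ω‖ ^ 2 - 2 * a * ⟪Y ω, U ω⟫ + a ^ 2 * ‖Y ω‖ ^ 2 := fun ω => by
    rw [norm_sub_sq_real, real_inner_smul_right, norm_smul, real_inner_comm, mul_pow,
      Real.norm_eq_abs, sq_abs]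
    ring
  have hUY : Integrable (fun ω => ‖U ω‖ ^ 2 - 2 * a * ⟪Y ω, U ω⟫) μ :=
    hU.norm.integrable_sq.sub ((hY.integrable_inner hU).const_mul _)
  simp_rw [hpt]
  rw [integral_add hUY (hY.norm.integrable_sq.const_mul _), integral_sub hU.norm.integrable_sq
    ((hY.integrable_inner hU).const_mul _), integral_const_mul, integral_const_mul, hcross]

end ConditionalExpectation

lemma one_div_mul_sum_le_of_descent {A V : ℕ → ℝ} {a C : ℝ} (ha : 0 < a) (hA : ∀ k, 0 ≤ A k)
    (hstep : ∀ k, 2 * a * V k ≤ A k - A (k + 1) + a ^ 2 * C) {K : ℕ} (hK : 0 < K) :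
    1 / (K : ℝ) * ∑ k ∈ Finset.range K, V k ≤ C * a / 2 + A 0 / (2 * a * K) := by
  have hsum : 2 * a * ∑ k ∈ Finset.range K, V k ≤ A 0 - A K + K * (a ^ 2 * C) :=
    calc 2 * a * ∑ k ∈ Finset.range K, V k = ∑ k ∈ Finset.range K, 2 * a * V k :=
          Finset.mul_sum _ _ _
      _ ≤ ∑ k ∈ Finset.range K, (A k - A (k + 1) + a ^ 2 * C) :=
          Finset.sum_le_sum fun k _ => hstep k
      _ = A 0 - A K + K * (a ^ 2 * C) := by
          rw [Finset.sum_add_distrib, Finset.sum_range_sub', Finset.sum_const,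
            Finset.card_range, nsmul_eq_mul]
  have hKpos : (0 : ℝ) < K := by exact_mod_cast hK
  calc 1 / (K : ℝ) * ∑ k ∈ Finset.range K, V k
      = 2 * a * (∑ k ∈ Finset.range K, V k) / (2 * a * K) := by field_simp
    _ ≤ (A 0 + K * (a ^ 2 * C)) / (2 * a * K) := by gcongr; linarith [hA K]
    _ = C * a / 2 + A 0 / (2 * a * K) := by field_simp; ring

lemma memLp_sgd_iterate {Ω H : Type*} {m0 : MeasurableSpace Ω} {μ : Measure Ω}
    [IsFiniteMeasure μ] [NormedAddCommGroup H] [NormedSpace ℝ H] {p : ENNReal}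
    {x₀ : H} {α : ℕ → ℝ} {g x : ℕ → Ω → H} (hx0 : x 0 = fun _ => x₀)
    (hxrec : ∀ k, x (k + 1) = fun ω => x k ω - α k • g k ω) (hg : ∀ k, MemLp (g k) p μ) :
    ∀ k, MemLp (x k) p μ
  | 0 => hx0 ▸ memLp_const x₀
  | k + 1 => hxrec k ▸ (memLp_sgd_iterate hx0 hxrec hg k).sub ((hg k).const_smul (α k))

lemma rsgd_descent_step {Ω H : Type*} [MeasureSpace Ω] [IsProbabilityMeasure (ℙ : Measure Ω)]
    [NormedAddCommGroup H] [InnerProductSpace ℝ H] [CompleteSpace H]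
    (𝓕 : Filtration ℕ (inferInstance : MeasurableSpace Ω)) (f : H → ℝ) {x₀ x' : H}
    {α : ℕ → ℝ} {b : ℕ} {σ2 a G : ℝ} {g x : ℕ → Ω → H} (hg_L2 : ∀ k, MemLp (g k) 2 ℙ)
    (hx0 : x 0 = fun _ => x₀) (hxrec : ∀ k, x (k + 1) = fun ω => x k ω - α k • g k ω)
    (hx_meas : ∀ k, StronglyMeasurable[𝓕 k] (x k))
    (hg_mean : ∀ k, condExp (𝓕 k) ℙ (g k) =ᵐ[ℙ] fun ω => gradient f (x k ω))
    (hg_var : ∀ k, ∀ᵐ ω ∂ℙ,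
      condExp (𝓕 k) ℙ (fun ω' => ‖g k ω' - gradient f (x k ω')‖ ^ 2) ω ≤ σ2 / b)
    (hconst : ∀ k, α k = a) (hGbound : ∀ k, (∫ ω, ‖gradient f (x k ω)‖ ^ 2 ∂ℙ) ≤ G ^ 2)
    (k : ℕ) :
    2 * a * ∫ ω, ⟪gradient f (x k ω), x k ω - x'⟫ ∂ℙ
      ≤ ∫ ω, ‖x k ω - x'‖ ^ 2 ∂ℙ - ∫ ω, ‖x (k + 1) ω - x'‖ ^ 2 ∂ℙ
        + a ^ 2 * (σ2 / b + G ^ 2) := by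
  have hsecond : ∫ ω, ‖g k ω‖ ^ 2 ∂ℙ ≤ σ2 / b + G ^ 2 := by
    rw [integral_norm_sq_eq_add_of_condExp_ae_eq (𝓕.le k) (hg_L2 k) (hg_mean k)]
    exact add_le_add (integral_le_of_ae_condExp_le (𝓕.le k) (hg_var k)) (hGbound k)
  have hexpand := integral_norm_sub_smul_sq (U := fun ω => x k ω - x') (𝓕.le k)
    ((memLp_sgd_iterate hx0 hxrec hg_L2 k).sub (memLp_const x'))
    ((hx_meas k).sub stronglyMeasurable_const).aestronglyMeasurable (hg_L2 k) (hg_mean k) a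
  have hnext : ∀ ω, x (k + 1) ω - x' = (x k ω - x') - a • g k ω := fun ω => by
    rw [hxrec, hconst, sub_right_comm]
  simp_rw [hnext, hexpand]
  linarith [mul_le_mul_of_nonneg_left hsecond (sq_nonneg a)]

theorem rsgd_constant_step_vi_sum_bound_general
    {Ω : Type*} [MeasureSpace Ω] [IsProbabilityMeasure (ℙ : Measure Ω)]
    {H : Type*} [NormedAddCommGroup H] [InnerProductSpace ℝ H] [CompleteSpace H]
    (𝓕 : Filtration ℕ (inferInstance : MeasurableSpace Ω))
    (f : H → ℝ)
    (x₀ : H) (α : ℕ → ℝ)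
    (b : ℕ) (σ2 : ℝ)
    (g : ℕ → Ω → H)
    (hg_L2 : ∀ k, MemLp (g k) 2 ℙ)
    (x : ℕ → Ω → H)
    (hx0 : x 0 = fun _ => x₀)
    (hxrec : ∀ k, x (k + 1) = fun ω => x k ω - α k • g k ω)
    (hx_meas : ∀ k, StronglyMeasurable[𝓕 k] (x k))
    (hg_mean : ∀ k, condExp (𝓕 k) ℙ (g k) =ᵐ[ℙ] fun ω => gradient f (x k ω))
    (hg_var : ∀ k, ∀ᵐ ω ∂ℙ,
      condExp (𝓕 k) ℙ (fun ω' => ‖g k ω' - gradient f (x k ω')‖ ^ 2) ω ≤ σ2 / b)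
    (a : ℝ) (ha : 0 < a) (hconst : ∀ k, α k = a)
    (G : ℝ)
    (hGbound : ∀ k, (∫ ω, ‖gradient f (x k ω)‖ ^ 2 ∂ℙ) ≤ G ^ 2) :
    ∀ K : ℕ, 1 ≤ K → ∀ x' : H,
      (1 / (K : ℝ)) * ∑ k ∈ Finset.range K,
          ∫ ω, ⟪gradient f (x k ω), x k ω - x'⟫ ∂ℙ
        ≤ (σ2 / b + G ^ 2) * a / 2 + ‖x₀ - x'‖ ^ 2 / (2 * a * K) := by
  intro K hK x'
  have hA0 : ∫ ω, ‖x 0 ω - x'‖ ^ 2 ∂ℙ = ‖x₀ - x'‖ ^ 2 := by simp [hx0]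
  rw [← hA0]
  exact one_div_mul_sum_le_of_descent ha (fun k => integral_nonneg fun ω => by positivity)
    (rsgd_descent_step 𝓕 f hg_L2 hx0 hxrec hx_meas hg_mean hg_var hconst hGbound) hK

/-- Theorem 3 (second assertion) of the paper in the Euclidean/Hilbert setting
(`ζ(κ,c) = 1`, so `C₁ = 1/2` and `C₂ = ‖x₀ − x‖²/(2α)`): for RSGD with constant
step size `α > 0` and `E[‖∇f(x_k)‖²] ≤ G²`, for every `K ≥ 1` and `x ∈ H`,
`(1/K) ∑_{k<K} V_k(x) ≤ (σ²/b + G²) · α/2 + ‖x₀ − x‖²/(2αK)`. -/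
theorem rsgd_constant_step_vi_sum_bound
    {Ω : Type*} [MeasureSpace Ω] [IsProbabilityMeasure (ℙ : Measure Ω)]
    {H : Type*} [NormedAddCommGroup H] [InnerProductSpace ℝ H] [CompleteSpace H]
    (𝓕 : Filtration ℕ (inferInstance : MeasurableSpace Ω))
    (f : H → ℝ) (hf : ContDiff ℝ 1 f)
    (x₀ : H) (α : ℕ → ℝ) (hα : ∀ k, 0 < α k)
    (b : ℕ) (hb : 1 ≤ b) (σ2 : ℝ) (hσ2 : 0 ≤ σ2)
    (g : ℕ → Ω → H)
    (hg_meas : ∀ k, StronglyMeasurable[𝓕 (k + 1)] (g k))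
    (hg_L2 : ∀ k, MemLp (g k) 2 ℙ)
    (x : ℕ → Ω → H)
    (hx0 : x 0 = fun _ => x₀)
    (hxrec : ∀ k, x (k + 1) = fun ω => x k ω - α k • g k ω)
    (hx_meas : ∀ k, StronglyMeasurable[𝓕 k] (x k))
    (hg_mean : ∀ k, condExp (𝓕 k) ℙ (g k) =ᵐ[ℙ] fun ω => gradient f (x k ω))
    (hg_var : ∀ k, ∀ᵐ ω ∂ℙ,
      condExp (𝓕 k) ℙ (fun ω' => ‖g k ω' - gradient f (x k ω')‖ ^ 2) ω ≤ σ2 / b)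
    (hx_int : ∀ k, Integrable (fun ω => ‖x k ω‖ ^ 2) ℙ)
    (hgrad_int : ∀ k, Integrable (fun ω => ‖gradient f (x k ω)‖ ^ 2) ℙ)
    (a : ℝ) (ha : 0 < a) (hconst : ∀ k, α k = a)
    (G : ℝ) (hG : 0 < G)
    (hGbound : ∀ k, (∫ ω, ‖gradient f (x k ω)‖ ^ 2 ∂ℙ) ≤ G ^ 2) :
    ∀ K : ℕ, 1 ≤ K → ∀ x' : H,
      (1 / (K : ℝ)) * ∑ k ∈ Finset.range K,
          ∫ ω, ⟪gradient f (x k ω), x k ω - x'⟫ ∂ℙ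
        ≤ (σ2 / b + G ^ 2) * a / 2 + ‖x₀ - x'‖ ^ 2 / (2 * a * K) :=
  rsgd_constant_step_vi_sum_bound_general 𝓕 f x₀ α b σ2 g hg_L2 x hx0 hxrec hx_meas hg_mean hg_var a
    ha hconst G hGbound
end

section
/- Suppose the step sizes satisfy ∑_{k=0}^{∞} α_k = +∞ and ∑_{k=0}^{∞} α_k² < +∞, and that there is G > 0 with E[‖∇f(x_k)‖²] ≤ G² for all k. Then for every x ∈ H, liminf_{k→∞} V_k(x) ≤ 0. -/
/-!
Writing `y_k := x_k - x'`, one step of the scheme gives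
`E‖y_{k+1}‖² = E‖y_k‖² - 2 α_k E⟪g_k, y_k⟫ + α_k² E‖g_k‖²`. Since `y_k` is `𝓕_k`-measurable,
the tower property turns `E⟪g_k, y_k⟫` into `V_k`, and `E‖g_k‖² ≤ 2σ²/b + 2G²`. Telescoping and
`∑ α_k² < ∞` bound the partial sums of `α_k V_k` from above. If `liminf V_k > 0`, then eventually
`V_k ≥ ε > 0` and these partial sums would grow like `ε ∑ α_k = ∞`.
-/

open MeasureTheory ProbabilityTheory Filter RealInnerProductSpace Finset

lemma bddAbove_range_sum_of_le_sub_add {u a c : ℕ → ℝ} (ha : ∀ k, 0 ≤ a k)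
    (hc : ∀ k, 0 ≤ c k) (hc_sum : Summable c) (h : ∀ k, u k ≤ a k - a (k + 1) + c k) :
    BddAbove (Set.range fun K => ∑ k ∈ range K, u k) := by
  refine ⟨a 0 + ∑' k, c k, ?_⟩
  rintro _ ⟨K, rfl⟩
  calc ∑ k ∈ range K, u k
      ≤ ∑ k ∈ range K, (a k - a (k + 1) + c k) := sum_le_sum fun k _ => h k
    _ = a 0 - a K + ∑ k ∈ range K, c k := by rw [sum_add_distrib, sum_range_sub']
    _ ≤ a 0 + ∑' k, c k := by
      linarith [ha K, hc_sum.sum_le_tsum (range K) fun k _ => hc k]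

lemma tendsto_sum_range_mul_atTop {α V : ℕ → ℝ} {ε : ℝ} (hα : ∀ k, 0 ≤ α k)
    (hdiv : Tendsto (fun K => ∑ k ∈ range K, α k) atTop atTop) (hε : 0 < ε)
    (hV : ∀ᶠ k in atTop, ε ≤ V k) :
    Tendsto (fun K => ∑ k ∈ range K, α k * V k) atTop atTop := by
  obtain ⟨N, hN⟩ := eventually_atTop.1 hV
  set P := ∑ k ∈ range N, α k * (V k - ε)
  refine tendsto_atTop_mono' atTop ?_
    (tendsto_atTop_add_const_right _ P (hdiv.const_mul_atTop hε))
  filter_upwards [eventually_ge_atTop N] with K hK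
  have hP : P ≤ ∑ k ∈ range K, α k * (V k - ε) :=
    sum_le_sum_of_subset_of_nonneg (range_mono hK) fun k _ hk =>
      mul_nonneg (hα k) (sub_nonneg.2 (hN k (by simpa using hk)))
  calc ε * ∑ k ∈ range K, α k + P
      ≤ ε * ∑ k ∈ range K, α k + ∑ k ∈ range K, α k * (V k - ε) := by linarith
    _ = ∑ k ∈ range K, α k * V k := by
      rw [mul_sum, ← sum_add_distrib]
      exact sum_congr rfl fun k _ => by ring

lemma liminf_le_zero_of_bddAbove_sum_mul {α V : ℕ → ℝ} (hα : ∀ k, 0 ≤ α k)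
    (hdiv : Tendsto (fun K => ∑ k ∈ range K, α k) atTop atTop)
    (hbdd : BddAbove (Set.range fun K => ∑ k ∈ range K, α k * V k)) :
    liminf V atTop ≤ 0 := by
  by_contra! hpos
  -- in `ℝ`, a sequence that is not bounded below has junk `liminf` equal to `0`
  have hV_bdd : atTop.IsBoundedUnder (· ≥ ·) V := by
    by_contra hV
    exact hpos.ne' (Real.liminf_of_not_isBoundedUnder hV)
  have hV := eventually_lt_of_lt_liminf (half_lt_self hpos) hV_bdd
  exact not_bddAbove_of_tendsto_atTop
    (tendsto_sum_range_mul_atTop hα hdiv (half_pos hpos) (hV.mono fun _ => le_of_lt)) hbdd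

section

variable {Ω E : Type*} {m m0 : MeasurableSpace Ω} {μ : Measure Ω}
  [NormedAddCommGroup E]

lemma MeasureTheory.MemLp.integrable_norm_sq {f : Ω → E} (hf : MemLp f 2 μ) :
    Integrable (fun ω => ‖f ω‖ ^ 2) μ :=
  (memLp_two_iff_integrable_sq_norm hf.1).1 hf

lemma integral_norm_sq_le_two_mul_add {g d : Ω → E} (hg : MemLp g 2 μ) (hd : MemLp d 2 μ) :
    ∫ ω, ‖g ω‖ ^ 2 ∂μ ≤ 2 * ∫ ω, ‖g ω - d ω‖ ^ 2 ∂μ + 2 * ∫ ω, ‖d ω‖ ^ 2 ∂μ := by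
  have hgd : Integrable (fun ω => 2 * ‖g ω - d ω‖ ^ 2) μ :=
    (hg.sub hd).integrable_norm_sq.const_mul 2
  have hd2 := hd.integrable_norm_sq.const_mul 2
  rw [← integral_const_mul, ← integral_const_mul, ← integral_add hgd hd2]
  refine integral_mono hg.integrable_norm_sq (hgd.add hd2) fun ω => ?_
  have := pow_le_pow_left₀ (norm_nonneg _) (norm_le_norm_sub_add (g ω) (d ω)) 2
  nlinarith [sq_nonneg (‖g ω - d ω‖ - ‖d ω‖)]

lemma integral_le_of_condExp_le [IsProbabilityMeasure μ] (hm : m ≤ m0) {f : Ω → ℝ} {c : ℝ}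
    (hf : ∀ᵐ ω ∂μ, μ[f|m] ω ≤ c) :
    ∫ ω, f ω ∂μ ≤ c := by
  rw [← integral_condExp hm]
  simpa using integral_mono_ae integrable_condExp (integrable_const c) hf

variable [InnerProductSpace ℝ E]

lemma MeasureTheory.MemLp.integrable_inner_s9 {f g : Ω → E} (hf : MemLp f 2 μ)
    (hg : MemLp g 2 μ) :
    Integrable (fun ω => ⟪f ω, g ω⟫) μ :=
  memLp_one_iff_integrable.1 ((innerSL ℝ).memLp_of_bilin 1 hf hg)

lemma integral_condExp_inner [CompleteSpace E] [IsFiniteMeasure μ] (hm : m ≤ m0) {f g : Ω → E}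
    (hf : Integrable f μ) (hfg : Integrable (fun ω => ⟪f ω, g ω⟫) μ)
    (hg : AEStronglyMeasurable[m] g μ) :
    ∫ ω, ⟪μ[f|m] ω, g ω⟫ ∂μ = ∫ ω, ⟪f ω, g ω⟫ ∂μ := by
  rw [← integral_condExp hm (f := fun ω => ⟪f ω, g ω⟫)]
  refine integral_congr_ae ?_
  filter_upwards [condExp_bilin_of_aestronglyMeasurable_right (innerSL ℝ) hg hfg hf] with ω hω
  exact hω.symm

lemma integral_norm_sub_smul_sq_s9 {y g : Ω → E} (hy : MemLp y 2 μ) (hg : MemLp g 2 μ) (a : ℝ) :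
    ∫ ω, ‖y ω - a • g ω‖ ^ 2 ∂μ =
      ∫ ω, ‖y ω‖ ^ 2 ∂μ - 2 * a * ∫ ω, ⟪g ω, y ω⟫ ∂μ + a ^ 2 * ∫ ω, ‖g ω‖ ^ 2 ∂μ := by
  have hpt : ∀ ω, ‖y ω - a • g ω‖ ^ 2 =
      ‖y ω‖ ^ 2 - 2 * a * ⟪g ω, y ω⟫ + a ^ 2 * ‖g ω‖ ^ 2 := fun ω => by
    rw [norm_sub_sq_real, real_inner_smul_right, norm_smul, Real.norm_eq_abs, mul_pow, sq_abs,
      real_inner_comm]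
    ring
  have hinner := (hg.integrable_inner_s9 hy).const_mul (2 * a)
  have hdiff : Integrable (fun ω => ‖y ω‖ ^ 2 - 2 * a * ⟪g ω, y ω⟫) μ :=
    hy.integrable_norm_sq.sub hinner
  simp_rw [hpt]
  rw [integral_add hdiff (hg.integrable_norm_sq.const_mul _),
    integral_sub hy.integrable_norm_sq hinner, integral_const_mul, integral_const_mul]

end

theorem rsgd_diminishing_step_vi_liminf_general
    {Ω : Type*} [MeasureSpace Ω] [IsProbabilityMeasure (ℙ : Measure Ω)]
    {H : Type*} [NormedAddCommGroup H] [InnerProductSpace ℝ H] [CompleteSpace H]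
    (𝓕 : Filtration ℕ (inferInstance : MeasurableSpace Ω))
    (f : H → ℝ) (α : ℕ → ℝ) (hα : ∀ k, 0 < α k)
    (b : ℕ) (σ2 : ℝ)
    (g : ℕ → Ω → H)
    (hg_L2 : ∀ k, MemLp (g k) 2 ℙ)
    (x : ℕ → Ω → H)
    (hxrec : ∀ k, x (k + 1) = fun ω => x k ω - α k • g k ω)
    (hx_meas : ∀ k, StronglyMeasurable[𝓕 k] (x k))
    (hg_mean : ∀ k, condExp (𝓕 k) ℙ (g k) =ᵐ[ℙ] fun ω => gradient f (x k ω))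
    (hg_var : ∀ k, ∀ᵐ ω ∂ℙ,
      condExp (𝓕 k) ℙ (fun ω' => ‖g k ω' - gradient f (x k ω')‖ ^ 2) ω ≤ σ2 / b)
    (hx_int : ∀ k, Integrable (fun ω => ‖x k ω‖ ^ 2) ℙ)
    (hgrad_int : ∀ k, Integrable (fun ω => ‖gradient f (x k ω)‖ ^ 2) ℙ)
    (hdiv : Tendsto (fun K => ∑ k ∈ Finset.range K, α k) atTop atTop)
    (hsum : Summable (fun k => α k ^ 2))
    (G : ℝ)
    (hGbound : ∀ k, (∫ ω, ‖gradient f (x k ω)‖ ^ 2 ∂ℙ) ≤ G ^ 2) :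
    ∀ x' : H,
      liminf (fun k => ∫ ω, ⟪gradient f (x k ω), x k ω - x'⟫ ∂ℙ) atTop ≤ 0 := by
  intro x'
  have hy_L2 : ∀ k, MemLp (fun ω => x k ω - x') 2 ℙ := fun k =>
    ((memLp_two_iff_integrable_sq_norm ((hx_meas k).mono (𝓕.le k)).aestronglyMeasurable).2
      (hx_int k)).sub (memLp_const x')
  -- the gradient term is a.e. a conditional expectation, hence measurable
  have hgrad_L2 : ∀ k, MemLp (fun ω => gradient f (x k ω)) 2 ℙ := fun k =>
    (memLp_two_iff_integrable_sq_norm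
      ((stronglyMeasurable_condExp.mono (𝓕.le k)).aestronglyMeasurable.congr (hg_mean k))).2
      (hgrad_int k)
  have hV : ∀ k, ∫ ω, ⟪g k ω, x k ω - x'⟫ = ∫ ω, ⟪gradient f (x k ω), x k ω - x'⟫ := fun k => by
    rw [← integral_condExp_inner (𝓕.le k) ((hg_L2 k).integrable one_le_two)
      ((hg_L2 k).integrable_inner_s9 (hy_L2 k))
      ((hx_meas k).sub stronglyMeasurable_const).aestronglyMeasurable]
    refine integral_congr_ae ?_
    filter_upwards [hg_mean k] with ω hω
    rw [hω]
  have hg_sq : ∀ k, ∫ ω, ‖g k ω‖ ^ 2 ≤ 2 * (σ2 / b) + 2 * G ^ 2 := fun k =>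
    (integral_norm_sq_le_two_mul_add (hg_L2 k) (hgrad_L2 k)).trans (by
      linarith [integral_le_of_condExp_le (𝓕.le k) (hg_var k), hGbound k])
  refine liminf_le_zero_of_bddAbove_sum_mul (fun k => (hα k).le) hdiv
    (bddAbove_range_sum_of_le_sub_add (a := fun k => (∫ ω, ‖x k ω - x'‖ ^ 2) / 2)
      (c := fun k => α k ^ 2 * (∫ ω, ‖g k ω‖ ^ 2) / 2)
      (fun k => by positivity) (fun k => by positivity) ?_ fun k => ?_)
  · refine (Summable.of_nonneg_of_le (fun k => by positivity) (fun k => ?_)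
      (hsum.mul_right (2 * (σ2 / b) + 2 * G ^ 2))).div_const 2
    exact mul_le_mul_of_nonneg_left (hg_sq k) (sq_nonneg _)
  · have := integral_norm_sub_smul_sq_s9 (hy_L2 k) (hg_L2 k) (α k)
    simp_rw [hxrec, sub_right_comm _ _ x']
    rw [hV k] at this
    linarith

/-- Theorem 4 (first assertion) of the paper in the Euclidean/Hilbert setting:
for RSGD with diminishing step sizes (`∑ α_k = ∞`, `∑ α_k² < ∞`) and
`E[‖∇f(x_k)‖²] ≤ G²`, for every `x ∈ H`, `liminf_{k→∞} V_k(x) ≤ 0`. -/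
theorem rsgd_diminishing_step_vi_liminf
    {Ω : Type*} [MeasureSpace Ω] [IsProbabilityMeasure (ℙ : Measure Ω)]
    {H : Type*} [NormedAddCommGroup H] [InnerProductSpace ℝ H] [CompleteSpace H]
    (𝓕 : Filtration ℕ (inferInstance : MeasurableSpace Ω))
    (f : H → ℝ) (hf : ContDiff ℝ 1 f)
    (x₀ : H) (α : ℕ → ℝ) (hα : ∀ k, 0 < α k)
    (b : ℕ) (hb : 1 ≤ b) (σ2 : ℝ) (hσ2 : 0 ≤ σ2)
    (g : ℕ → Ω → H)
    (hg_meas : ∀ k, StronglyMeasurable[𝓕 (k + 1)] (g k))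
    (hg_L2 : ∀ k, MemLp (g k) 2 ℙ)
    (x : ℕ → Ω → H)
    (hx0 : x 0 = fun _ => x₀)
    (hxrec : ∀ k, x (k + 1) = fun ω => x k ω - α k • g k ω)
    (hx_meas : ∀ k, StronglyMeasurable[𝓕 k] (x k))
    (hg_mean : ∀ k, condExp (𝓕 k) ℙ (g k) =ᵐ[ℙ] fun ω => gradient f (x k ω))
    (hg_var : ∀ k, ∀ᵐ ω ∂ℙ,
      condExp (𝓕 k) ℙ (fun ω' => ‖g k ω' - gradient f (x k ω')‖ ^ 2) ω ≤ σ2 / b)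
    (hx_int : ∀ k, Integrable (fun ω => ‖x k ω‖ ^ 2) ℙ)
    (hgrad_int : ∀ k, Integrable (fun ω => ‖gradient f (x k ω)‖ ^ 2) ℙ)
    (hdiv : Tendsto (fun K => ∑ k ∈ Finset.range K, α k) atTop atTop)
    (hsum : Summable (fun k => α k ^ 2))
    (G : ℝ) (hG : 0 < G)
    (hGbound : ∀ k, (∫ ω, ‖gradient f (x k ω)‖ ^ 2 ∂ℙ) ≤ G ^ 2) :
    ∀ x' : H,
      liminf (fun k => ∫ ω, ⟪gradient f (x k ω), x k ω - x'⟫ ∂ℙ) atTop ≤ 0 :=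
  rsgd_diminishing_step_vi_liminf_general 𝓕 f α hα b σ2 g hg_L2 x hxrec hx_meas hg_mean hg_var
    hx_int hgrad_int hdiv hsum G hGbound
end
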